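/- arXiv:2503.11369 — 2 statements merged into one kernel-verified Lean document; each statement's English description precedes it below -/
import Mathlib

section
/- Let f : ℝ^d → ℝ^d be differentiable at 0 with f(0) = 0, and suppose f is subhomogeneous on the nonnegative cone, i.e. θ·f(u) ≤ f(θ·u) componentwise for all θ ∈ (0,1) and all u ≥ 0 (componentwise). Then f(u) ≤ (Df(0))·u componentwise for every u ≥ 0. -/
/-- If `f : ℝ^d → ℝ^d` is differentiable at `0` with `f 0 = 0` and is subhomogeneous
on the nonnegative cone (`θ • f u ≤ f (θ • u)` componentwise for `θ ∈ (0,1)`, `u ≥ 0`),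
then `f u ≤ (Df(0)) u` componentwise for every `u ≥ 0`. -/
theorem stmt_0 {d : ℕ} (f : (Fin d → ℝ) → (Fin d → ℝ))
    (hdiff : DifferentiableAt ℝ f 0) (h0 : f 0 = 0)
    (hsub : ∀ θ : ℝ, 0 < θ → θ < 1 → ∀ u : Fin d → ℝ, 0 ≤ u → θ • f u ≤ f (θ • u)) :
    ∀ u : Fin d → ℝ, 0 ≤ u → f u ≤ fderiv ℝ f 0 u := by
  intro u hu
  -- derivative of t ↦ f (t • u) at 0 is (fderiv ℝ f 0) u
  have hc : HasDerivAt (fun t : ℝ => t • u) u 0 := by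
    simpa using (hasDerivAt_id (0 : ℝ)).smul_const u
  have hF : HasFDerivAt f (fderiv ℝ f 0) ((fun t : ℝ => t • u) 0) := by
    simpa using hdiff.hasFDerivAt
  have hD : HasDerivAt (fun t : ℝ => f (t • u)) (fderiv ℝ f 0 u) 0 :=
    hF.comp_hasDerivAt 0 hc
  have hslope : Filter.Tendsto (fun t : ℝ => t⁻¹ • f (t • u)) (nhdsWithin 0 (Set.Ioi 0))
      (nhds (fderiv ℝ f 0 u)) := by
    have := hasDerivAt_iff_tendsto_slope.mp hD
    have h2 := this.mono_left (nhdsWithin_mono 0 (by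
      intro t ht
      exact ne_of_gt ht : Set.Ioi (0:ℝ) ⊆ {(0:ℝ)}ᶜ))
    refine h2.congr' ?_
    filter_upwards [self_mem_nhdsWithin] with t ht
    simp [slope, h0]
  intro i
  have htend : Filter.Tendsto (fun t : ℝ => (t⁻¹ • f (t • u)) i) (nhdsWithin 0 (Set.Ioi 0))
      (nhds ((fderiv ℝ f 0 u) i)) :=
    ((continuous_apply i).continuousAt.tendsto.comp hslope)
  refine ge_of_tendsto htend ?_
  filter_upwards [self_mem_nhdsWithin,
    Ioo_mem_nhdsGT_of_mem (by norm_num : (0:ℝ) ∈ Set.Ico 0 1)] with t ht ht1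
  have h : t * f u i ≤ f (t • u) i := by simpa using hsub t ht ht1.2 u hu i
  have : f u i ≤ t⁻¹ * f (t • u) i := (le_inv_mul_iff₀ ht).mpr h
  simpa using this
end

section
/- Let k : ℝ → ℝ be continuous and strictly concave with k(0) < 0 and k(λ) ≤ −γλ² + βλ + M for all λ, where γ > 0. Set c* := min_{λ>0} (−k(λ)/λ). Then for c < c* the equation k(λ) + cλ = 0 has no solution λ > 0; for c = c* it has exactly one solution λ* > 0; and for c > c* it has exactly two solutions 0 < λ_c⁻ < λ_c⁺. -/
/-!
Write `g_c λ = k λ + c λ`; it is strictly concave (hence continuous), so it has at most two zeros,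
and two zeros `a < b` force `g_c > 0` strictly between them. The minimality of `c*` says exactly
that `g_{c*} ≤ 0` on `λ > 0` with equality at `l0`. For `c < c*` this gives `g_c < 0` on `λ > 0`;
for `c = c*` every positive zero is a maximiser of `g_{c*}` on `(0, ∞)`, which is unique by strict
concavity. For `c > c*` we have `g_c 0 = k 0 < 0 < g_c l0`, while the quadratic bound makes `g_c`
negative far out, so the intermediate value theorem gives one zero on each side of `l0`.
-/

open Set Filter

namespace StrictConcaveOn

variable {s : Set ℝ} {f : ℝ → ℝ}

lemma add_const_mul (hf : StrictConcaveOn ℝ s f) (c : ℝ) :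
    StrictConcaveOn ℝ s fun x => f x + c * x :=
  hf.add_concaveOn ((LinearMap.mul ℝ ℝ c).concaveOn hf.1)

lemma pos_of_mem_Ioo_of_eq_zero {a b x : ℝ} (hf : StrictConcaveOn ℝ s f) (ha : a ∈ s)
    (hb : b ∈ s) (hfa : f a = 0) (hfb : f b = 0) (hx : x ∈ Ioo a b) : 0 < f x := by
  have hab : a < b := hx.1.trans hx.2
  simpa [hfa, hfb] using
    hf.lt_on_openSegment ha hb hab.ne (by rwa [openSegment_eq_Ioo hab])

lemma eq_or_eq_of_eq_zero {a b x : ℝ} (hf : StrictConcaveOn ℝ s f) (ha : a ∈ s) (hb : b ∈ s)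
    (hab : a < b) (hfa : f a = 0) (hfb : f b = 0) (hx : x ∈ s) (hfx : f x = 0) :
    x = a ∨ x = b := by
  by_contra! hne
  obtain ⟨hxa, hxb⟩ := hne
  rcases hxa.lt_or_gt with hxa | hax
  · exact (hf.pos_of_mem_Ioo_of_eq_zero hx hb hfx hfb ⟨hxa, hab⟩).ne' hfa
  rcases hxb.lt_or_gt with hxb | hbx
  · exact (hf.pos_of_mem_Ioo_of_eq_zero ha hb hfa hfb ⟨hax, hxb⟩).ne' hfx
  · exact (hf.pos_of_mem_Ioo_of_eq_zero ha hx hfa hfx ⟨hab, hbx⟩).ne' hfb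

lemma exists_two_zeros {a b d : ℝ} (hf : StrictConcaveOn ℝ univ f) (hab : a < b) (hbd : b < d)
    (hfa : f a < 0) (hfb : 0 < f b) (hfd : f d < 0) :
    ∃ x y, x ∈ Ioo a b ∧ y ∈ Ioo b d ∧ ∀ z, f z = 0 ↔ z = x ∨ z = y := by
  have hcont : Continuous f :=
    continuousOn_univ.mp (hf.concaveOn.continuousOn isOpen_univ)
  obtain ⟨x, hx, hfx⟩ := intermediate_value_Ioo hab.le hcont.continuousOn ⟨hfa, hfb⟩
  obtain ⟨y, hy, hfy⟩ := intermediate_value_Ioo' hbd.le hcont.continuousOn ⟨hfd, hfb⟩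
  refine ⟨x, y, hx, hy, fun z => ⟨fun hfz => ?_, ?_⟩⟩
  · exact hf.eq_or_eq_of_eq_zero trivial trivial (hx.2.trans hy.1) hfx hfy trivial hfz
  · rintro (rfl | rfl) <;> assumption

end StrictConcaveOn

lemma exists_gt_add_mul_neg_of_le_quadratic {k : ℝ → ℝ} {γ β M : ℝ} (hγ : 0 < γ)
    (hbound : ∀ l : ℝ, k l ≤ -γ * l ^ 2 + β * l + M) (c x₀ : ℝ) :
    ∃ R, x₀ < R ∧ k R + c * R < 0 := by
  have hquad : Tendsto (fun l : ℝ => l * (-γ * l + (β + c)) + M) atTop atBot :=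
    tendsto_atBot_add_const_right _ M <| tendsto_id.atTop_mul_atBot₀ <|
      tendsto_atBot_add_const_right _ _ (tendsto_id.const_mul_atTop_of_neg (neg_neg_of_pos hγ))
  obtain ⟨R, hR, hx₀R⟩ := ((hquad.eventually_lt_atBot 0).and (eventually_gt_atTop x₀)).exists
  exact ⟨R, hx₀R, by linarith [hbound R]⟩

theorem stmt_3_general (k : ℝ → ℝ)
    (hconc : StrictConcaveOn ℝ Set.univ k) (hk0 : k 0 < 0)
    (γ β M : ℝ) (hγ : 0 < γ) (hbound : ∀ l : ℝ, k l ≤ -γ * l ^ 2 + β * l + M)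
    (cstar : ℝ) (l0 : ℝ) (hl0 : 0 < l0) (hmin : cstar = -k l0 / l0)
    (hlow : ∀ μ : ℝ, 0 < μ → cstar ≤ -k μ / μ) :
    (∀ c : ℝ, c < cstar → ¬ ∃ l : ℝ, 0 < l ∧ k l + c * l = 0) ∧
    (∃! l : ℝ, 0 < l ∧ k l + cstar * l = 0) ∧
    (∀ c : ℝ, cstar < c → ∃ lm lp : ℝ, 0 < lm ∧ lm < lp ∧
      ∀ l : ℝ, 0 < l → (k l + c * l = 0 ↔ l = lm ∨ l = lp)) := by
  have hroot_l0 : k l0 + cstar * l0 = 0 := by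
    rw [hmin]; field_simp; ring
  have hnonpos : ∀ μ, 0 < μ → k μ + cstar * μ ≤ 0 := fun μ hμ => by
    have := (le_div_iff₀ hμ).mp (hlow μ hμ); linarith
  refine ⟨fun c hc ⟨l, hl, hroot⟩ => ?_, ⟨l0, ⟨hl0, hroot_l0⟩, ?_⟩, fun c hc => ?_⟩
  · linarith [hnonpos l hl, mul_lt_mul_of_pos_right hc hl]
  · rintro y ⟨hy, hroot_y⟩
    have hmax : ∀ x, k x + cstar * x = 0 → IsMaxOn (fun μ => k μ + cstar * μ) (Ioi 0) x :=
      fun x hx μ hμ => (hnonpos μ hμ).trans hx.ge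
    exact ((hconc.subset (subset_univ _) (convex_Ioi 0)).add_const_mul cstar).eq_of_isMaxOn
      (hmax y hroot_y) (hmax l0 hroot_l0) hy hl0
  · obtain ⟨R, hl0R, hR⟩ := exists_gt_add_mul_neg_of_le_quadratic hγ hbound c l0
    obtain ⟨lm, lp, hlm, hlp, hzeros⟩ := (hconc.add_const_mul c).exists_two_zeros hl0 hl0R
      (by simpa using hk0) (by nlinarith) hR
    exact ⟨lm, lp, hlm.1, hlm.2.trans hlp.1, fun l _ => hzeros l⟩

/-- Trichotomy for the roots of the characteristic equation `k λ + c λ = 0`, `λ > 0`,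
where `cstar = min_{λ>0} (−k λ / λ)` (attained at `l0 > 0`). -/
theorem stmt_3 (k : ℝ → ℝ) (hcont : Continuous k)
    (hconc : StrictConcaveOn ℝ Set.univ k) (hk0 : k 0 < 0)
    (γ β M : ℝ) (hγ : 0 < γ) (hbound : ∀ l : ℝ, k l ≤ -γ * l ^ 2 + β * l + M)
    (cstar : ℝ) (l0 : ℝ) (hl0 : 0 < l0) (hmin : cstar = -k l0 / l0)
    (hlow : ∀ μ : ℝ, 0 < μ → cstar ≤ -k μ / μ) :
    (∀ c : ℝ, c < cstar → ¬ ∃ l : ℝ, 0 < l ∧ k l + c * l = 0) ∧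
    (∃! l : ℝ, 0 < l ∧ k l + cstar * l = 0) ∧
    (∀ c : ℝ, cstar < c → ∃ lm lp : ℝ, 0 < lm ∧ lm < lp ∧
      ∀ l : ℝ, 0 < l → (k l + c * l = 0 ↔ l = lm ∨ l = lp)) :=
  stmt_3_general k hconc hk0 γ β M hγ hbound cstar l0 hl0 hmin hlow
end
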